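/- There is an absolute constant C such that the following holds. Let r ≥ 1, let W₁,…,W_r be binary words each containing at least one symbol 1, let k₁,…,k_r ≥ 1 be integers, and let W be the concatenation W₁^{k₁} W₂^{k₂} ⋯ W_r^{k_r}. Then ‖P_W‖₁ ≤ C ∑_{i=1}^r log(2+k_i) · ‖P_{W_i}‖₁. -/

import Mathlib

/-!
Since `P_{A^k}(θ) = P_A(θ) D_k(|A| θ)` with the Dirichlet kernel `D_k(x) = ∑_{j<k} e(jx)`, and the
triangle inequality splits a concatenation into its blocks, it suffices to bound
`∫ |P(θ)| |D_k(ℓθ)| dθ` for an exponential polynomial `P` with frequencies in `[1, ℓ]`.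
On each interval of length `1/ℓ` the weight `|D_k(ℓ·)|` has integral `‖D_k‖₁ / ℓ = O(log k / ℓ)`,
and `|P|` exceeds its average there by at most the integral of `|P'|`. Summed up, the error is
`‖P'‖₁ / ℓ ≤ 2π ‖P‖₁` by Bernstein's inequality, which holds because `P' / (2πi)` is the
convolution of `P` with `e(t) D_ℓ(t)²`, a kernel of `L¹` norm `‖D_ℓ‖₂² = ℓ`.
-/

open Finset intervalIntegral

/-- `e θ = e^{2πiθ}`. -/
noncomputable def e (θ : ℝ) : ℂ := Complex.exp (2 * Real.pi * Complex.I * θ)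

/-- For a binary word `W = (x₁,…,x_ℓ)`, `P_W(θ) = ∑_{m=1}^ℓ x_m e(mθ)`. -/
noncomputable def PW (W : List Bool) (θ : ℝ) : ℂ :=
  ∑ m ∈ Finset.range W.length, (if W.getD m false then 1 else 0) * e ((m + 1) * θ)

open scoped Real ComplexConjugate

lemma e_add (x y : ℝ) : e (x + y) = e x * e y := by
  simp only [e, ← Complex.exp_add]
  push_cast
  ring_nf

lemma norm_e (x : ℝ) : ‖e x‖ = 1 := by
  rw [e, show 2 * π * Complex.I * x = ((2 * π * x : ℝ) : ℂ) * Complex.I by push_cast; ring]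
  exact Complex.norm_exp_ofReal_mul_I _

@[simp]
lemma e_zero : e 0 = 1 := by simp [e]

@[fun_prop]
lemma continuous_e : Continuous e := by
  unfold e
  fun_prop

lemma hasDerivAt_e_mul (a θ : ℝ) :
    HasDerivAt (fun θ => e (a * θ)) (2 * π * Complex.I * a * e (a * θ)) θ := by
  have h := (((hasDerivAt_id (θ : ℂ)).const_mul (2 * π * Complex.I * a)).cexp).comp_ofReal
  simp only [id, mul_one] at h
  convert h using 1
  · ext t
    simp only [e, Complex.ofReal_mul, ← mul_assoc]
  · simp only [e, Complex.ofReal_mul, ← mul_assoc]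
    ring

lemma e_intCast (n : ℤ) : e n = 1 := by
  rw [e, show 2 * π * Complex.I * ((n : ℝ) : ℂ) = n * (2 * π * Complex.I) by push_cast; ring]
  exact Complex.exp_int_mul_two_pi_mul_I n

lemma e_natCast_mul (n : ℕ) (x : ℝ) : e (n * x) = e x ^ n := by
  rw [e, e, ← Complex.exp_nat_mul]
  push_cast
  ring_nf

lemma e_neg (x : ℝ) : e (-x) = conj (e x) := by
  rw [e, e, ← Complex.exp_conj]
  simp only [map_mul, Complex.conj_I, Complex.conj_ofReal, map_ofNat]
  push_cast
  ring_nf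

lemma integral_e_intCast_mul (n : ℤ) :
    ∫ t in (0 : ℝ)..1, e (n * t) = if n = 0 then 1 else 0 := by
  split_ifs with hn
  · simp [hn, e]
  have hc : 2 * π * Complex.I * n ≠ 0 := by simp [Real.pi_ne_zero, hn]
  simp_rw [e, Complex.ofReal_mul, Complex.ofReal_intCast, ← mul_assoc]
  rw [integral_exp_mul_complex hc]
  have := e_intCast n
  simp only [e, Complex.ofReal_intCast] at this
  simp [this]

lemma integral_sum_e {ι : Type*} (s : Finset ι) (n : ι → ℤ) :
    ∫ t in (0 : ℝ)..1, ∑ i ∈ s, e (n i * t) = #{i ∈ s | n i = 0} := by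
  rw [integral_finsetSum fun i _ =>
    (by fun_prop : Continuous fun t => e (n i * t)).intervalIntegrable _ _]
  simp [integral_e_intCast_mul]

noncomputable def dirichletKernel (k : ℕ) (x : ℝ) : ℂ := ∑ j ∈ range k, e (j * x)

@[fun_prop]
lemma continuous_dirichletKernel (k : ℕ) : Continuous (dirichletKernel k) := by
  unfold dirichletKernel
  fun_prop

lemma dirichletKernel_succ (k : ℕ) (x : ℝ) :
    dirichletKernel (k + 1) x = 1 + e x * dirichletKernel k x := by
  simp only [dirichletKernel, sum_range_succ', mul_sum, ← e_add]
  push_cast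
  simp [add_comm, add_mul]

lemma dirichletKernel_periodic (k : ℕ) : Function.Periodic (dirichletKernel k) 1 := fun x => by
  refine sum_congr rfl fun j _ => ?_
  rw [mul_add, mul_one, e_add, show (j : ℝ) = ((j : ℤ) : ℝ) by simp, e_intCast, mul_one]

lemma norm_dirichletKernel_one_sub (k : ℕ) (x : ℝ) :
    ‖dirichletKernel k (1 - x)‖ = ‖dirichletKernel k x‖ := by
  rw [← Complex.norm_conj (dirichletKernel k x), dirichletKernel, dirichletKernel, map_sum]
  congr 1
  refine sum_congr rfl fun j _ => ?_
  rw [show (j : ℝ) * (1 - x) = ((j : ℤ) : ℝ) + -(j * x) by push_cast; ring, e_add, e_intCast,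
    one_mul, e_neg]

lemma integral_norm_dirichletKernel_sq (k : ℕ) :
    ∫ t in (0 : ℝ)..1, ‖dirichletKernel k t‖ ^ 2 = k := by
  have hexpand (t : ℝ) : ((‖dirichletKernel k t‖ ^ 2 : ℝ) : ℂ) =
      ∑ p ∈ range k ×ˢ range k, e (((p.1 : ℤ) - p.2 : ℤ) * t) := by
    rw [Complex.ofReal_pow, ← Complex.mul_conj', dirichletKernel, map_sum, sum_mul_sum,
      sum_product]
    refine sum_congr rfl fun a _ => sum_congr rfl fun b _ => ?_
    rw [← e_neg, ← e_add]
    push_cast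
    ring_nf
  have hdiag : #{p ∈ range k ×ˢ range k | ((p.1 : ℤ) - p.2 : ℤ) = 0} = k := by
    calc _ = #{p ∈ range k ×ˢ range k | p.1 = p.2} :=
          congrArg card (filter_congr fun p _ => by simp [sub_eq_zero])
      _ = k := by simpa [diag_eq_filter] using (range k).diag_card
  apply Complex.ofReal_injective
  rw [← intervalIntegral.integral_ofReal]
  simp_rw [hexpand, integral_sum_e, hdiag]
  simp

lemma norm_dirichletKernel_le (k : ℕ) (x : ℝ) : ‖dirichletKernel k x‖ ≤ k := by
  refine (norm_sum_le _ _).trans ?_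
  simp [norm_e]

lemma norm_e_sub_one (x : ℝ) : ‖e x - 1‖ = 2 * |Real.sin (π * x)| := by
  rw [e, show 2 * π * Complex.I * x = Complex.I * ((2 * π * x : ℝ) : ℂ) by push_cast; ring,
    Complex.norm_exp_I_mul_ofReal_sub_one]
  simp only [norm_mul, Real.norm_ofNat, Real.norm_eq_abs]
  ring_nf

lemma norm_dirichletKernel_le_inv {x : ℝ} (k : ℕ) (hx₀ : 0 < x) (hx₁ : x ≤ 1 / 2) :
    ‖dirichletKernel k x‖ ≤ (2 * x)⁻¹ := by
  have hsin : 2 * x ≤ |Real.sin (π * x)| := by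
    have := Real.mul_le_sin (x := π * x) (by positivity) (by nlinarith [Real.pi_pos])
    calc 2 * x = 2 / π * (π * x) := by field_simp
      _ ≤ |Real.sin (π * x)| := this.trans (le_abs_self _)
  have hden : 4 * x ≤ ‖e x - 1‖ := by rw [norm_e_sub_one]; linarith
  have hne : e x ≠ 1 := fun h => by rw [h, sub_self, norm_zero] at hden; linarith
  have hnum : ‖e x ^ k - 1‖ ≤ 2 := (norm_sub_le _ _).trans (by simp [norm_e]; norm_num)
  rw [dirichletKernel]
  simp_rw [e_natCast_mul]
  rw [geom_sum_eq hne, norm_div, div_le_iff₀ (by linarith)]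
  calc ‖e x ^ k - 1‖ ≤ 2 := hnum
    _ = (2 * x)⁻¹ * (4 * x) := by field_simp; ring
    _ ≤ (2 * x)⁻¹ * ‖e x - 1‖ := by gcongr

lemma integral_norm_dirichletKernel_half_le {k : ℕ} (hk : 1 ≤ k) :
    ∫ x in (0 : ℝ)..1 / 2, ‖dirichletKernel k x‖ ≤ (1 + Real.log k) / 2 := by
  have hk' : (1 : ℝ) ≤ k := by exact_mod_cast hk
  set δ : ℝ := (2 * k)⁻¹
  have hδ₀ : 0 < δ := by positivity
  have hδ : δ ≤ 1 / 2 := by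
    rw [one_div]; exact inv_anti₀ two_pos (by linarith)
  have hint (a b : ℝ) :
      IntervalIntegrable (fun x => ‖dirichletKernel k x‖) MeasureTheory.volume a b :=
    (by fun_prop : Continuous fun x => ‖dirichletKernel k x‖).intervalIntegrable a b
  have hnear : ∫ x in (0 : ℝ)..δ, ‖dirichletKernel k x‖ ≤ 1 / 2 :=
    calc ∫ x in (0 : ℝ)..δ, ‖dirichletKernel k x‖ ≤ ∫ x in (0 : ℝ)..δ, (k : ℝ) :=
          integral_mono_on hδ₀.le (hint _ _) intervalIntegrable_const
            fun x _ => norm_dirichletKernel_le k x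
      _ = 1 / 2 := by simp [δ]; field_simp
  have hfar : ∫ x in δ..1 / 2, ‖dirichletKernel k x‖ ≤ Real.log k / 2 := by
    have h0 : (0 : ℝ) ∉ Set.uIcc δ (1 / 2) := by
      rw [Set.uIcc_of_le hδ]; exact fun h => hδ₀.not_ge h.1
    calc ∫ x in δ..1 / 2, ‖dirichletKernel k x‖ ≤ ∫ x in δ..1 / 2, 2⁻¹ * x⁻¹ := by
          refine integral_mono_on hδ (hint _ _)
            ((intervalIntegrable_inv (fun x hx => ne_of_mem_of_not_mem hx h0)
              continuousOn_id).const_mul _)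
            fun x hx => ?_
          rw [← mul_inv]
          exact norm_dirichletKernel_le_inv k (hδ₀.trans_le hx.1) hx.2
      _ = Real.log k / 2 := by
          rw [intervalIntegral.integral_const_mul, integral_inv h0]
          simp only [δ, div_inv_eq_mul]
          ring_nf
  rw [← integral_add_adjacent_intervals (hint 0 δ) (hint δ (1 / 2))]
  linarith

lemma integral_norm_dirichletKernel_le (k : ℕ) :
    ∫ x in (0 : ℝ)..1, ‖dirichletKernel k x‖ ≤ 2 * Real.log (2 + k) := by
  rcases Nat.eq_zero_or_pos k with rfl | hk
  · simp [dirichletKernel]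
    exact Real.log_nonneg (by norm_num)
  have hint (a b : ℝ) :
      IntervalIntegrable (fun x => ‖dirichletKernel k x‖) MeasureTheory.volume a b :=
    (by fun_prop : Continuous fun x => ‖dirichletKernel k x‖).intervalIntegrable a b
  have hsymm : ∫ x in (1 / 2 : ℝ)..1, ‖dirichletKernel k x‖ =
      ∫ x in (0 : ℝ)..1 / 2, ‖dirichletKernel k x‖ := by
    have h := integral_comp_sub_left (fun x => ‖dirichletKernel k x‖) (1 : ℝ)
      (a := 0) (b := 1 / 2)
    rw [show (1 : ℝ) - 1 / 2 = 1 / 2 by norm_num, sub_zero] at h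
    simpa only [norm_dirichletKernel_one_sub] using h.symm
  have hlog_three : 1 ≤ Real.log 3 := by
    rw [Real.le_log_iff_exp_le (by norm_num)]
    exact Real.exp_one_lt_d9.le.trans (by norm_num)
  have hk' : (1 : ℝ) ≤ k := by exact_mod_cast hk
  have hlog : Real.log k ≤ Real.log (2 + k) := Real.log_le_log (by positivity) (by linarith)
  have hlog' : Real.log 3 ≤ Real.log (2 + k) := Real.log_le_log (by positivity) (by linarith)
  rw [← integral_add_adjacent_intervals (hint 0 (1 / 2)) (hint (1 / 2) 1), hsymm]
  linarith [integral_norm_dirichletKernel_half_le hk]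

section DerivativeBounds

variable {E : Type*} [NormedAddCommGroup E] [NormedSpace ℝ E] [CompleteSpace E] {f f' : ℝ → E}

lemma norm_le_norm_add_integral_norm_deriv (hf : ∀ x, HasDerivAt f (f' x) x)
    (hf' : Continuous f') {a b x y : ℝ} (hx : x ∈ Set.Icc a b) (hy : y ∈ Set.Icc a b) :
    ‖f x‖ ≤ ‖f y‖ + ∫ t in a..b, ‖f' t‖ := by
  have hsub : Set.uIoc y x ⊆ Set.Ioc a b :=
    Set.Ioc_subset_Ioc (le_min hy.1 hx.1) (max_le hy.2 hx.2)
  calc ‖f x‖ ≤ ‖f y‖ + ‖f x - f y‖ := norm_le_norm_add_norm_sub' _ _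
    _ = ‖f y‖ + ‖∫ t in y..x, f' t‖ := by
        rw [integral_eq_sub_of_hasDerivAt (fun t _ => hf t) (hf'.intervalIntegrable _ _)]
    _ ≤ ‖f y‖ + ∫ t in Set.uIoc y x, ‖f' t‖ := by
        gcongr
        exact norm_integral_le_integral_norm_uIoc
    _ ≤ ‖f y‖ + ∫ t in a..b, ‖f' t‖ := by
        gcongr
        rw [integral_of_le (hx.1.trans hx.2)]
        exact MeasureTheory.setIntegral_mono_set (hf'.norm.integrableOn_Ioc)
          (MeasureTheory.ae_of_all _ fun t => norm_nonneg _) hsub.eventuallyLE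

lemma norm_le_average_add_integral_norm_deriv (hf : ∀ x, HasDerivAt f (f' x) x)
    (hf' : Continuous f') {a b x : ℝ} (hab : a < b) (hx : x ∈ Set.Icc a b) :
    ‖f x‖ ≤ (b - a)⁻¹ * (∫ y in a..b, ‖f y‖) + ∫ t in a..b, ‖f' t‖ := by
  have hfc : Continuous f := Differentiable.continuous fun x => (hf x).differentiableAt
  have hba : 0 < b - a := sub_pos.2 hab
  have hint : (b - a) * ‖f x‖ ≤ (∫ y in a..b, ‖f y‖) + (b - a) * ∫ t in a..b, ‖f' t‖ := by
    have h : ∫ _ in a..b, ‖f x‖ ≤ ∫ y in a..b, (‖f y‖ + ∫ t in a..b, ‖f' t‖) :=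
      integral_mono_on hab.le intervalIntegrable_const
        ((hfc.norm.add continuous_const).intervalIntegrable a b)
        fun y hy => norm_le_norm_add_integral_norm_deriv hf hf' hx hy
    rwa [intervalIntegral.integral_const, integral_add (hfc.norm.intervalIntegrable _ _)
      intervalIntegrable_const, intervalIntegral.integral_const, smul_eq_mul, smul_eq_mul] at h
  calc ‖f x‖ = (b - a)⁻¹ * ((b - a) * ‖f x‖) := (inv_mul_cancel_left₀ hba.ne' _).symm
    _ ≤ (b - a)⁻¹ * ((∫ y in a..b, ‖f y‖) + (b - a) * ∫ t in a..b, ‖f' t‖) := by gcongr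
    _ = (b - a)⁻¹ * (∫ y in a..b, ‖f y‖) + ∫ t in a..b, ‖f' t‖ := by
        rw [mul_add, inv_mul_cancel_left₀ hba.ne']

lemma integral_norm_mul_le_of_hasDerivAt (hf : ∀ x, HasDerivAt f (f' x) x)
    (hf' : Continuous f') {g : ℝ → ℝ} (hg : Continuous g) (hg₀ : ∀ x, 0 ≤ g x) {a b : ℝ}
    (hab : a < b) :
    ∫ x in a..b, ‖f x‖ * g x ≤
      ((b - a)⁻¹ * (∫ x in a..b, ‖f x‖) + ∫ x in a..b, ‖f' x‖) * ∫ x in a..b, g x := by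
  have hfc : Continuous f := Differentiable.continuous fun x => (hf x).differentiableAt
  rw [← intervalIntegral.integral_const_mul]
  exact integral_mono_on hab.le ((hfc.norm.mul hg).intervalIntegrable _ _)
    ((continuous_const.mul hg).intervalIntegrable _ _)
    fun x hx => mul_le_mul_of_nonneg_right (norm_le_average_add_integral_norm_deriv hf hf' hab hx)
      (hg₀ x)

lemma integral_comp_mul_of_periodic {g : ℝ → ℝ} (hgp : Function.Periodic g 1) {c : ℝ}
    (hc : c ≠ 0) (t : ℝ) :
    ∫ θ in t / c..(t + 1) / c, g (c * θ) = c⁻¹ * ∫ x in (0 : ℝ)..1, g x := by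
  rw [intervalIntegral.integral_comp_mul_left g hc, smul_eq_mul, mul_div_cancel₀ _ hc,
    mul_div_cancel₀ _ hc, hgp.intervalIntegral_add_eq t 0, zero_add]

lemma integral_norm_mul_comp_mul_le_of_hasDerivAt (hf : ∀ x, HasDerivAt f (f' x) x)
    (hf' : Continuous f') {g : ℝ → ℝ} (hg : Continuous g) (hg₀ : ∀ x, 0 ≤ g x)
    (hgp : Function.Periodic g 1) {ℓ : ℕ} (hℓ : 0 < ℓ) :
    ∫ θ in (0 : ℝ)..1, ‖f θ‖ * g (ℓ * θ) ≤
      ((∫ θ in (0 : ℝ)..1, ‖f θ‖) + (ℓ : ℝ)⁻¹ * ∫ θ in (0 : ℝ)..1, ‖f' θ‖) *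
        ∫ x in (0 : ℝ)..1, g x := by
  have hℓ' : (0 : ℝ) < ℓ := by exact_mod_cast hℓ
  have hpiece (j : ℕ) : (j : ℝ) / ℓ < (j + 1) / ℓ := by gcongr; linarith
  have hlength (j : ℕ) : (((j + 1) / ℓ : ℝ) - j / ℓ)⁻¹ = ℓ := by field_simp; ring
  have hsplit {φ : ℝ → ℝ} (hφ : Continuous φ) :
      ∫ θ in (0 : ℝ)..1, φ θ = ∑ j ∈ range ℓ, ∫ θ in (j / ℓ : ℝ)..(j + 1) / ℓ, φ θ := by
    have h := sum_integral_adjacent_intervals (μ := MeasureTheory.volume)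
      (a := fun j : ℕ => (j / ℓ : ℝ)) (fun j _ => hφ.intervalIntegrable _ _) (n := ℓ)
    simp only [Nat.cast_succ, Nat.cast_zero, zero_div, div_self hℓ'.ne'] at h
    exact h.symm
  have hfc : Continuous f := Differentiable.continuous fun x => (hf x).differentiableAt
  have hgℓ : Continuous fun θ => g (ℓ * θ) := hg.comp (continuous_const.mul continuous_id)
  rw [hsplit (φ := fun θ => ‖f θ‖ * g (ℓ * θ)) (hfc.norm.mul hgℓ),
    hsplit (φ := fun θ => ‖f θ‖) hfc.norm, hsplit (φ := fun θ => ‖f' θ‖) hf'.norm]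
  calc ∑ j ∈ range ℓ, ∫ θ in (j / ℓ : ℝ)..(j + 1) / ℓ, ‖f θ‖ * g (ℓ * θ)
      ≤ ∑ j ∈ range ℓ, (ℓ * (∫ θ in (j / ℓ : ℝ)..(j + 1) / ℓ, ‖f θ‖) +
          ∫ θ in (j / ℓ : ℝ)..(j + 1) / ℓ, ‖f' θ‖) * ((ℓ : ℝ)⁻¹ * ∫ x in (0 : ℝ)..1, g x) :=
        sum_le_sum fun j _ => by
          simpa only [hlength, integral_comp_mul_of_periodic hgp hℓ'.ne'] using
            integral_norm_mul_le_of_hasDerivAt hf hf' hgℓ (fun _ => hg₀ _) (hpiece j)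
    _ = _ := by
        rw [← sum_mul, sum_add_distrib, ← mul_sum]
        field_simp

end DerivativeBounds

noncomputable def expPoly (c : ℕ → ℂ) (ℓ : ℕ) (θ : ℝ) : ℂ :=
  ∑ m ∈ range ℓ, c m * e ((m + 1) * θ)

@[fun_prop]
lemma continuous_expPoly (c : ℕ → ℂ) (ℓ : ℕ) : Continuous (expPoly c ℓ) := by
  unfold expPoly
  fun_prop

lemma expPoly_periodic (c : ℕ → ℂ) (ℓ : ℕ) : Function.Periodic (expPoly c ℓ) 1 := fun θ => by
  refine sum_congr rfl fun m _ => ?_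
  rw [show ((m : ℝ) + 1) * (θ + 1) = (m + 1) * θ + ((m + 1 : ℤ) : ℝ) by push_cast; ring, e_add,
    e_intCast, mul_one]

lemma hasDerivAt_expPoly (c : ℕ → ℂ) (ℓ : ℕ) (θ : ℝ) :
    HasDerivAt (expPoly c ℓ) (2 * π * Complex.I * expPoly (fun m => (m + 1) * c m) ℓ θ) θ := by
  unfold expPoly
  rw [mul_sum]
  refine HasDerivAt.fun_sum fun m _ => ?_
  exact ((hasDerivAt_e_mul (m + 1) θ).const_mul (c m)).congr_deriv (by push_cast; ring)

-- The coefficient of `e((m + 1) t)` in `e(t) D_ℓ(t)²` counts the `m + 1` pairs `a + b = m`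
-- with `a, b < ℓ`.
lemma integral_e_mul_dirichletKernel_sq {ℓ m : ℕ} (hm : m < ℓ) (θ : ℝ) :
    ∫ t in (0 : ℝ)..1, e ((m + 1) * (θ - t)) * (e t * dirichletKernel ℓ t ^ 2) =
      (m + 1) * e ((m + 1) * θ) := by
  have hexpand (t : ℝ) : e ((m + 1) * (θ - t)) * (e t * dirichletKernel ℓ t ^ 2) =
      e ((m + 1) * θ) * ∑ p ∈ range ℓ ×ˢ range ℓ, e (((p.1 + p.2 : ℕ) - m : ℤ) * t) := by
    rw [dirichletKernel, sq, sum_mul_sum, ← sum_product', mul_sum, mul_sum, mul_sum]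
    refine sum_congr rfl fun p _ => ?_
    rw [← e_add, ← e_add, ← e_add, ← e_add]
    push_cast
    ring_nf
  have hcount : #{p ∈ range ℓ ×ˢ range ℓ | ((p.1 + p.2 : ℕ) - m : ℤ) = 0} = m + 1 := by
    rw [← Finset.Nat.card_antidiagonal m]
    congr 1
    ext p
    simp only [mem_filter, mem_product, mem_range, Finset.HasAntidiagonal.mem_antidiagonal]
    omega
  simp_rw [hexpand, intervalIntegral.integral_const_mul, integral_sum_e, hcount]
  push_cast
  ring

lemma expPoly_succ_mul_eq_integral (c : ℕ → ℂ) (ℓ : ℕ) (θ : ℝ) :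
    expPoly (fun m => (m + 1) * c m) ℓ θ =
      ∫ t in (0 : ℝ)..1, expPoly c ℓ (θ - t) * (e t * dirichletKernel ℓ t ^ 2) := by
  simp_rw [expPoly, sum_mul, mul_assoc]
  rw [integral_finsetSum fun m _ => (by fun_prop : Continuous _).intervalIntegrable _ _]
  refine sum_congr rfl fun m hm => ?_
  rw [intervalIntegral.integral_const_mul, integral_e_mul_dirichletKernel_sq (mem_range.1 hm)]
  ring

lemma integral_norm_expPoly_comp_sub_right (c : ℕ → ℂ) (ℓ : ℕ) (t : ℝ) :
    ∫ θ in (0 : ℝ)..1, ‖expPoly c ℓ (θ - t)‖ = ∫ θ in (0 : ℝ)..1, ‖expPoly c ℓ θ‖ := by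
  rw [integral_comp_sub_right (fun θ => ‖expPoly c ℓ θ‖), zero_sub]
  simpa [neg_add_eq_sub] using ((expPoly_periodic c ℓ).comp (‖·‖)).intervalIntegral_add_eq (-t) 0

lemma integral_norm_expPoly_succ_mul_le (c : ℕ → ℂ) (ℓ : ℕ) :
    ∫ θ in (0 : ℝ)..1, ‖expPoly (fun m => (m + 1) * c m) ℓ θ‖ ≤
      ℓ * ∫ θ in (0 : ℝ)..1, ‖expPoly c ℓ θ‖ := by
  set F : ℝ → ℝ → ℝ := fun θ t => ‖dirichletKernel ℓ t‖ ^ 2 * ‖expPoly c ℓ (θ - t)‖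
  have hF : Continuous F.uncurry := by fun_prop
  have hpointwise (θ : ℝ) :
      ‖expPoly (fun m => (m + 1) * c m) ℓ θ‖ ≤ ∫ t in (0 : ℝ)..1, F θ t := by
    rw [expPoly_succ_mul_eq_integral]
    refine (norm_integral_le_integral_norm zero_le_one).trans_eq (integral_congr fun t _ => ?_)
    rw [norm_mul, norm_mul, norm_e, one_mul, norm_pow, mul_comm]
  calc ∫ θ in (0 : ℝ)..1, ‖expPoly (fun m => (m + 1) * c m) ℓ θ‖
      ≤ ∫ θ in (0 : ℝ)..1, ∫ t in (0 : ℝ)..1, F θ t :=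
        integral_mono_on zero_le_one ((by fun_prop : Continuous _).intervalIntegrable _ _)
          ((continuous_parametric_intervalIntegral_of_continuous' hF 0 1).intervalIntegrable _ _)
          fun θ _ => hpointwise θ
    _ = ∫ t in (0 : ℝ)..1, ∫ θ in (0 : ℝ)..1, F θ t :=
        MeasureTheory.intervalIntegral_intervalIntegral_swap
          (hF.continuousOn.integrableOn_compact (isCompact_Icc.prod isCompact_Icc) |>.mono_set
            (Set.prod_mono Set.uIoc_subset_uIcc Set.uIoc_subset_uIcc))
    _ = ℓ * ∫ θ in (0 : ℝ)..1, ‖expPoly c ℓ θ‖ := by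
        simp only [F, intervalIntegral.integral_const_mul, integral_norm_expPoly_comp_sub_right,
          intervalIntegral.integral_mul_const, integral_norm_dirichletKernel_sq]

lemma integral_norm_expPoly_mul_comp_mul_le (c : ℕ → ℂ) (ℓ : ℕ) {g : ℝ → ℝ} (hg : Continuous g)
    (hg₀ : ∀ x, 0 ≤ g x) (hgp : Function.Periodic g 1) :
    ∫ θ in (0 : ℝ)..1, ‖expPoly c ℓ θ‖ * g (ℓ * θ) ≤
      (1 + 2 * π) * (∫ θ in (0 : ℝ)..1, ‖expPoly c ℓ θ‖) * ∫ x in (0 : ℝ)..1, g x := by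
  rcases Nat.eq_zero_or_pos ℓ with rfl | hℓ
  · simp [expPoly]
  have hG : 0 ≤ ∫ x in (0 : ℝ)..1, g x := integral_nonneg zero_le_one fun x _ => hg₀ x
  have hnorm : ‖2 * π * Complex.I‖ = 2 * π := by
    simp [Complex.norm_real, abs_of_pos Real.pi_pos]
  refine (integral_norm_mul_comp_mul_le_of_hasDerivAt (hasDerivAt_expPoly c ℓ) (by fun_prop)
    hg hg₀ hgp hℓ).trans ?_
  refine mul_le_mul_of_nonneg_right ?_ hG
  simp only [norm_mul (2 * (π : ℂ) * Complex.I), hnorm, intervalIntegral.integral_const_mul]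
  calc (∫ θ in (0 : ℝ)..1, ‖expPoly c ℓ θ‖) +
        (ℓ : ℝ)⁻¹ * (2 * π * ∫ θ in (0 : ℝ)..1, ‖expPoly (fun m => (m + 1) * c m) ℓ θ‖)
      ≤ (∫ θ in (0 : ℝ)..1, ‖expPoly c ℓ θ‖) +
        (ℓ : ℝ)⁻¹ * (2 * π * (ℓ * ∫ θ in (0 : ℝ)..1, ‖expPoly c ℓ θ‖)) := by
        gcongr
        exact integral_norm_expPoly_succ_mul_le c ℓ
    _ = (1 + 2 * π) * ∫ θ in (0 : ℝ)..1, ‖expPoly c ℓ θ‖ := by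
        field_simp

lemma PW_eq_expPoly (W : List Bool) :
    PW W = expPoly (fun m => if W.getD m false then 1 else 0) W.length := rfl

lemma PW_append (A B : List Bool) (θ : ℝ) :
    PW (A ++ B) θ = PW A θ + e (A.length * θ) * PW B θ := by
  simp only [PW, List.length_append, sum_range_add, mul_sum]
  congr 1
  · exact sum_congr rfl fun m hm => by rw [List.getD_append _ _ _ _ (mem_range.1 hm)]
  · refine sum_congr rfl fun m _ => ?_
    rw [List.getD_append_right _ _ _ _ (Nat.le_add_right _ _), Nat.add_sub_cancel_left,
      mul_left_comm, ← e_add]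
    push_cast
    ring_nf

lemma PW_flatten_replicate (A : List Bool) (k : ℕ) (θ : ℝ) :
    PW (List.replicate k A).flatten θ = PW A θ * dirichletKernel k (A.length * θ) := by
  induction k with
  | zero => simp [PW, dirichletKernel]
  | succ k ih =>
    rw [List.replicate_succ, List.flatten_cons, PW_append, ih, dirichletKernel_succ]
    ring

lemma norm_PW_flatten_map_range_le (r : ℕ) (B : ℕ → List Bool) (θ : ℝ) :
    ‖PW ((List.range r).map B).flatten θ‖ ≤ ∑ i ∈ range r, ‖PW (B i) θ‖ := by
  induction r with
  | zero => simp [PW]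
  | succ r ih =>
    rw [List.range_succ, List.map_append, List.flatten_append, PW_append, sum_range_succ]
    refine (norm_add_le _ _).trans (add_le_add ih ?_)
    simp [norm_e]

lemma integral_norm_PW_flatten_map_range_le (r : ℕ) (B : ℕ → List Bool) :
    ∫ θ in (0 : ℝ)..1, ‖PW ((List.range r).map B).flatten θ‖ ≤
      ∑ i ∈ range r, ∫ θ in (0 : ℝ)..1, ‖PW (B i) θ‖ := by
  simp_rw [PW_eq_expPoly]
  rw [← integral_finsetSum fun i _ => (by fun_prop : Continuous _).intervalIntegrable _ _]
  exact integral_mono_on zero_le_one ((by fun_prop : Continuous _).intervalIntegrable _ _)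
    ((by fun_prop : Continuous _).intervalIntegrable _ _)
    fun θ _ => norm_PW_flatten_map_range_le r B θ

lemma integral_norm_PW_flatten_replicate_le (A : List Bool) (k : ℕ) :
    ∫ θ in (0 : ℝ)..1, ‖PW (List.replicate k A).flatten θ‖ ≤
      2 * (1 + 2 * π) * Real.log (2 + k) * ∫ θ in (0 : ℝ)..1, ‖PW A θ‖ := by
  simp only [PW_flatten_replicate, norm_mul]
  refine (integral_norm_expPoly_mul_comp_mul_le _ A.length (by fun_prop)
    (fun _ => norm_nonneg _) ((dirichletKernel_periodic k).comp _)).trans ?_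
  have hPW : 0 ≤ ∫ θ in (0 : ℝ)..1, ‖PW A θ‖ := integral_nonneg zero_le_one fun _ _ => norm_nonneg _
  calc (1 + 2 * π) * (∫ θ in (0 : ℝ)..1, ‖PW A θ‖) * ∫ x in (0 : ℝ)..1, ‖dirichletKernel k x‖
      ≤ (1 + 2 * π) * (∫ θ in (0 : ℝ)..1, ‖PW A θ‖) * (2 * Real.log (2 + k)) := by
        gcongr
        exact integral_norm_dirichletKernel_le k
    _ = _ := by ring

/-- Estimate (2.14): if `W = W₁^{k₁} W₂^{k₂} ⋯ W_r^{k_r}`, then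
`‖P_W‖₁ ≤ C ∑_{i=1}^r log(2+k_i) ‖P_{W_i}‖₁`. -/
theorem stmt_12 : ∃ C : ℝ, 0 < C ∧
    ∀ (r : ℕ) (W : ℕ → List Bool) (k : ℕ → ℕ),
      1 ≤ r → (∀ i < r, true ∈ W i) → (∀ i < r, 1 ≤ k i) →
      (∫ θ in (0:ℝ)..1,
          ‖PW (((List.range r).map fun i => (List.replicate (k i) (W i)).flatten).flatten) θ‖) ≤
        C * ∑ i ∈ Finset.range r,
          Real.log (2 + k i) * ∫ θ in (0:ℝ)..1, ‖PW (W i) θ‖ := by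
  refine ⟨2 * (1 + 2 * π), by positivity, fun r W k _ _ _ => ?_⟩
  calc _ ≤ ∑ i ∈ range r, ∫ θ in (0 : ℝ)..1, ‖PW (List.replicate (k i) (W i)).flatten θ‖ :=
        integral_norm_PW_flatten_map_range_le r _
    _ ≤ ∑ i ∈ range r, 2 * (1 + 2 * π) * Real.log (2 + k i) * ∫ θ in (0 : ℝ)..1, ‖PW (W i) θ‖ :=
        sum_le_sum fun i _ => integral_norm_PW_flatten_replicate_le (W i) (k i)
    _ = _ := by simp only [mul_sum, mul_assoc]
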